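/- Let (X, ℒ, λ) and (Y, ℳ, μ) be finite measure spaces, each admitting a measurable set of measure strictly between 0 and the total measure, let I ⊆ ℝ be a nonempty interval, and let f, g : I → ℝ⁺ be continuous bijections. Then the equation f⁻¹(∫_X f(g⁻¹(∫_Y g∘h dμ)) dλ) = g⁻¹(∫_Y g(f⁻¹(∫_X f∘h dλ)) dμ) holds for every (ℒ⊗ℳ)-measurable simple function h : X × Y → I if and only if there exists c > 0 with f = c·g. -/

import Mathlib

/-!
Write `α, α', β, β'` for the measures of `A, Aᶜ, B, Bᶜ` and `θ = f ∘ g⁻¹`, a bijection of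
`(0, ∞)`, continuous because continuous injections on an interval are strictly monotone.
Testing the equation on simple functions that are constant on the four cells of `A × B` turns
it into the Jensen equation `N (α P + α' Q) = α N P + α' N Q` on the open quadrant, for the
quasi-arithmetic mean `N (s, t) = θ (β θ⁻¹ s + β' θ⁻¹ t)`. A continuous solution of Jensen's
equation has translation-invariant increments, hence is affine. With `N` affine,
`θ (β p + β' q) = a θ p + b θ q + e`, so `θ` is affine by the same argument, and an affine
bijection of `(0, ∞)` is `p ↦ c p` with `c > 0`, i.e. `f = c g`. Conversely, if `f = c g` both
sides reduce to `g⁻¹` of the double integral of `g ∘ h`, by Fubini.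
-/

open MeasureTheory Set Filter Topology

theorem ContinuousOn.strictMonoOn_or_strictAntiOn_of_injOn {α β : Type*}
    [ConditionallyCompleteLinearOrder α] [TopologicalSpace α] [OrderTopology α] [DenselyOrdered α]
    [LinearOrder β] [TopologicalSpace β] [OrderClosedTopology β] {s : Set α} [s.OrdConnected]
    {f : α → β} (hc : ContinuousOn f s) (hi : InjOn f s) : StrictMonoOn f s ∨ StrictAntiOn f s := by
  rcases s.eq_empty_or_nonempty with rfl | ⟨x, hx⟩
  · exact Or.inl fun _ h => h.elim
  have : Inhabited s := ⟨⟨x, hx⟩⟩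
  exact (Continuous.strictMono_of_inj hc.domRestrict hi.injective).imp
    strictMono_domRestrict.mp strictAntiOn_iff_strictAnti.mpr

theorem strictMonoOn_or_strictAntiOn_of_rightInvOn {α β : Type*} [LinearOrder α] [LinearOrder β]
    {s : Set α} {t : Set β} {g : α → β} {G : β → α}
    (hg : StrictMonoOn g s ∨ StrictAntiOn g s) (hG : MapsTo G t s) (hgG : RightInvOn G g t) :
    StrictMonoOn G t ∨ StrictAntiOn G t :=
  hg.imp
    (fun hg _ hp _ hq hpq => (hg.lt_iff_lt (hG hp) (hG hq)).1 (by rwa [hgG hp, hgG hq]))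
    (fun hg _ hp _ hq hpq => (hg.lt_iff_gt (hG hp) (hG hq)).1 (by rwa [hgG hp, hgG hq]))

theorem ContinuousOn.of_strictMonoOn_or_strictAntiOn {α β : Type*}
    [LinearOrder α] [TopologicalSpace α] [OrderTopology α]
    [LinearOrder β] [TopologicalSpace β] [OrderTopology β] [DenselyOrdered β]
    {s : Set α} {f : α → β} (hf : StrictMonoOn f s ∨ StrictAntiOn f s) (hs : IsOpen s)
    (himg : IsOpen (f '' s)) : ContinuousOn f s := by
  intro a ha
  refine ContinuousAt.continuousWithinAt ?_
  rcases hf with hf | hf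
  · exact hf.continuousAt_of_image_mem_nhds (hs.mem_nhds ha) (himg.mem_nhds ⟨a, ha, rfl⟩)
  · exact hf.dual_right.continuousAt_of_image_mem_nhds (hs.mem_nhds ha)
      (himg.mem_nhds ⟨a, ha, rfl⟩)

theorem ContinuousOn.comp_rightInvOn {α β γ : Type*}
    [ConditionallyCompleteLinearOrder α] [TopologicalSpace α] [OrderTopology α] [DenselyOrdered α]
    [LinearOrder β] [TopologicalSpace β] [OrderTopology β] [DenselyOrdered β]
    [LinearOrder γ] [TopologicalSpace γ] [OrderTopology γ]
    {I : Set α} [I.OrdConnected] {J : Set γ} {f : α → β} {g : α → γ} {G : γ → α}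
    (hfc : ContinuousOn f I) (hfi : InjOn f I) (hgc : ContinuousOn g I) (hgi : InjOn g I)
    (hG : MapsTo G J I) (hgG : RightInvOn G g J) (hJ : IsOpen J) (himg : IsOpen ((f ∘ G) '' J)) :
    ContinuousOn (f ∘ G) J := by
  refine .of_strictMonoOn_or_strictAntiOn ?_ hJ himg
  rcases hfc.strictMonoOn_or_strictAntiOn_of_injOn hfi with hf | hf <;>
    rcases strictMonoOn_or_strictAntiOn_of_rightInvOn
      (hgc.strictMonoOn_or_strictAntiOn_of_injOn hgi) hG hgG with hG' | hG'
  exacts [.inl (hf.comp hG' hG), .inr (hf.comp_strictAntiOn hG' hG),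
    .inr (hf.comp_strictMonoOn hG' hG), .inl (hf.comp hG' hG)]

section Affine

variable {E : Type*} [AddCommGroup E] [Module ℝ E]

theorem increment_eq_of_map_add_smul {C : Set E} (hshift : ∀ D, ∃ P ∈ C, P + D ∈ C)
    {ρ : E → ℝ} {β β' a b e : ℝ} (hβ' : β' ≠ 0) (ha : a ≠ 0)
    (hρ : ∀ P ∈ C, ∀ Q ∈ C, ρ (β • P + β' • Q) = a * ρ P + b * ρ Q + e) :
    ∀ P ∈ C, ∀ Q ∈ C, ∀ D, P + D ∈ C → Q + D ∈ C →
      ρ (P + D) - ρ P = ρ (Q + D) - ρ Q := by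
  intro P hP Q hQ D hPD hQD
  obtain ⟨W, hW, hWD⟩ := hshift ((β / β') • D)
  -- shifting `R` by `D` is compensated by shifting `W` by `(β / β') • D`
  have key : ∀ R ∈ C, R + D ∈ C →
      a * (ρ (R + D) - ρ R) = b * (ρ (W + (β / β') • D) - ρ W) := by
    intro R hR hRD
    have hmove : β • (R + D) + β' • W = β • R + β' • (W + (β / β') • D) := by
      rw [smul_add, smul_add, smul_smul, mul_div_cancel₀ _ hβ']; abel
    have := congrArg ρ hmove
    rw [hρ _ hRD _ hW, hρ _ hR _ hWD] at this
    linear_combination this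
  exact mul_left_cancel₀ ha ((key P hP hPD).trans (key Q hQ hQD).symm)

variable [TopologicalSpace E] [IsTopologicalAddGroup E] [ContinuousSMul ℝ E]

theorem exists_affine_of_increment_eq {C : Set E} (hC : IsOpen C)
    (hadd : ∀ P ∈ C, ∀ Q ∈ C, P + Q ∈ C) (hshift : ∀ D, ∃ P ∈ C, P + D ∈ C)
    {ρ : E → ℝ} (hρ : ContinuousOn ρ C)
    (hinc : ∀ P ∈ C, ∀ Q ∈ C, ∀ D, P + D ∈ C → Q + D ∈ C →
      ρ (P + D) - ρ P = ρ (Q + D) - ρ Q) :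
    ∃ (ℓ : E →L[ℝ] ℝ) (e : ℝ), ∀ P ∈ C, ρ P = ℓ P + e := by
  choose base hbase hbase' using hshift
  set Δ : E → ℝ := fun D => ρ (base D + D) - ρ (base D)
  have hΔ : ∀ P ∈ C, ∀ D, P + D ∈ C → Δ D = ρ (P + D) - ρ P :=
    fun P hP D hPD => hinc _ (hbase D) P hP D (hbase' D) hPD
  have hΔadd : ∀ D₁ D₂, Δ (D₁ + D₂) = Δ D₁ + Δ D₂ := by
    intro D₁ D₂
    have h₀ : base D₁ + base D₂ ∈ C := hadd _ (hbase D₁) _ (hbase D₂)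
    have h₁ : base D₁ + base D₂ + D₁ ∈ C := by
      convert hadd _ (hbase' D₁) _ (hbase D₂) using 1; abel
    have h₂ : base D₁ + base D₂ + D₁ + D₂ ∈ C := by
      convert hadd _ (hbase' D₁) _ (hbase' D₂) using 1; abel
    rw [hΔ _ h₀ _ (by rwa [← add_assoc]), hΔ _ h₀ D₁ h₁, hΔ _ h₁ D₂ h₂, ← add_assoc]
    ring
  have hΔcont : Continuous Δ := by
    refine continuous_iff_continuousAt.2 fun D₀ => ?_
    have hnhds : {D | base D₀ + D ∈ C} ∈ 𝓝 D₀ :=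
      (hC.preimage (continuous_const_add _)).mem_nhds (hbase' D₀)
    refine ContinuousAt.congr ?_ (eventually_of_mem hnhds fun D hD => (hΔ _ (hbase D₀) D hD).symm)
    exact ((hρ.continuousAt (hC.mem_nhds (hbase' D₀))).comp
      (continuous_const_add _).continuousAt).sub continuousAt_const
  let ℓ := (AddMonoidHom.mk' Δ hΔadd).toRealLinearMap hΔcont
  refine ⟨ℓ, ρ (base 0) - ℓ (base 0), fun P hP => ?_⟩
  have h := hΔ (base 0) (hbase 0) (P - base 0) (by rwa [add_sub_cancel])
  change ℓ (P - base 0) = _ at h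
  rw [map_sub, add_sub_cancel] at h
  linarith

end Affine

theorem exists_affine_of_jensen_quadrant {ρ : ℝ × ℝ → ℝ} {α α' : ℝ} (hα : α ≠ 0) (hα' : α' ≠ 0)
    (hcont : ContinuousOn ρ (Ioi 0 ×ˢ Ioi 0))
    (hρ : ∀ P ∈ Ioi (0 : ℝ) ×ˢ Ioi (0 : ℝ), ∀ Q ∈ Ioi (0 : ℝ) ×ˢ Ioi (0 : ℝ),
      ρ (α • P + α' • Q) = α * ρ P + α' * ρ Q) :
    ∃ a b e : ℝ, ∀ s > 0, ∀ t > 0, ρ (s, t) = a * s + b * t + e := by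
  have hshift : ∀ D : ℝ × ℝ, ∃ P ∈ Ioi (0 : ℝ) ×ˢ Ioi (0 : ℝ), P + D ∈ Ioi 0 ×ˢ Ioi 0 :=
    fun D => ⟨(|D.1| + 1, |D.2| + 1), ⟨mem_Ioi.2 (by positivity), mem_Ioi.2 (by positivity)⟩,
      by simp only [mem_prod, mem_Ioi, Prod.fst_add, Prod.snd_add]
         constructor <;> linarith [neg_abs_le D.1, neg_abs_le D.2]⟩
  obtain ⟨ℓ, e, hℓ⟩ := exists_affine_of_increment_eq (isOpen_Ioi.prod isOpen_Ioi)
    (fun P hP Q hQ => ⟨add_pos hP.1 hQ.1, add_pos hP.2 hQ.2⟩) hshift hcont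
    (increment_eq_of_map_add_smul hshift hα' hα (e := 0) (by simpa using hρ))
  refine ⟨ℓ (1, 0), ℓ (0, 1), e, fun s hs t ht => ?_⟩
  have hst : ((s, t) : ℝ × ℝ) = s • (1, 0) + t • (0, 1) := by ext <;> simp
  rw [hℓ (s, t) ⟨hs, ht⟩, hst, map_add, map_smul, map_smul, smul_eq_mul, smul_eq_mul,
    mul_comm s, mul_comm t]

theorem pos_and_eq_zero_of_bijOn_Ioi {θ : ℝ → ℝ} {k e : ℝ} (hθ : ∀ p > 0, θ p = k * p + e)
    (hbij : BijOn θ (Ioi 0) (Ioi 0)) : 0 < k ∧ e = 0 := by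
  have hpos : ∀ p > 0, 0 < k * p + e := fun p hp => hθ p hp ▸ hbij.mapsTo hp
  have hsurj : ∀ v > 0, ∃ p > 0, k * p + e = v := fun v hv => by
    obtain ⟨p, hp, h⟩ := hbij.surjOn (mem_Ioi.2 hv)
    exact ⟨p, hp, hθ p hp ▸ h⟩
  have hk : 0 < k := by
    by_contra! hk
    obtain ⟨p, hp, h⟩ := hsurj (|e| + 1) (by positivity)
    nlinarith [le_abs_self e]
  refine ⟨hk, le_antisymm ?_ ?_⟩
  · by_contra! he
    obtain ⟨p, hp, h⟩ := hsurj (e / 2) (by positivity)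
    nlinarith [mul_pos hk hp]
  · by_contra! he
    have := hpos (-e / k) (div_pos (neg_pos.2 he) hk)
    rw [mul_div_cancel₀ _ hk.ne'] at this
    linarith

theorem exists_pos_eq_mul_of_map_add {θ : ℝ → ℝ} (hbij : BijOn θ (Ioi 0) (Ioi 0))
    (hcont : ContinuousOn θ (Ioi 0)) {β β' a b e : ℝ} (hβ : 0 < β) (hβ' : 0 < β')
    (h : ∀ p > 0, ∀ q > 0, θ (β * p + β' * q) = a * θ p + b * θ q + e) :
    ∃ c > 0, ∀ p > 0, θ p = c * p := by
  have hshift : ∀ D : ℝ, ∃ P ∈ Ioi (0 : ℝ), P + D ∈ Ioi 0 :=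
    fun D => ⟨|D| + 1, mem_Ioi.2 (by positivity), by simp only [mem_Ioi]; linarith [neg_abs_le D]⟩
  have ha : a ≠ 0 := by
    rintro rfl
    have := hbij.injOn (x₁ := β * 1 + β' * 1) (x₂ := β * 2 + β' * 1)
      (mem_Ioi.2 (by positivity)) (mem_Ioi.2 (by positivity))
      (by rw [h 1 one_pos 1 one_pos, h 2 two_pos 1 one_pos]; ring)
    linarith
  obtain ⟨ℓ, e', hℓ⟩ := exists_affine_of_increment_eq isOpen_Ioi
    (fun P hP Q hQ => add_pos hP hQ) hshift hcont
    (increment_eq_of_map_add_smul hshift hβ'.ne' ha (by simpa using h))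
  have hθ : ∀ p > 0, θ p = ℓ 1 * p + e' := fun p hp => by
    rw [hℓ p hp, mul_comm, ← smul_eq_mul, ← map_smul, smul_eq_mul, mul_one]
  obtain ⟨hc, rfl⟩ := pos_and_eq_zero_of_bijOn_Ioi hθ hbij
  exact ⟨ℓ 1, hc, fun p hp => by rw [hθ p hp, add_zero]⟩

def quasiArithMean (θ θ' : ℝ → ℝ) (β β' : ℝ) (P : ℝ × ℝ) : ℝ :=
  θ (β * θ' P.1 + β' * θ' P.2)

theorem quasiArithMean_pos {θ θ' : ℝ → ℝ} (hθ : MapsTo θ (Ioi 0) (Ioi 0))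
    (hθ' : MapsTo θ' (Ioi 0) (Ioi 0)) {β β' : ℝ} (hβ : 0 < β) (hβ' : 0 < β') {P : ℝ × ℝ}
    (hP : P ∈ Ioi (0 : ℝ) ×ˢ Ioi (0 : ℝ)) : 0 < quasiArithMean θ θ' β β' P := by
  have h₁ : 0 < θ' P.1 := hθ' hP.1
  have h₂ : 0 < θ' P.2 := hθ' hP.2
  exact hθ (show (0 : ℝ) < _ by positivity)

theorem exists_pos_eq_mul_of_quasiArithMean_jensen {θ θ' : ℝ → ℝ}
    (hbij : BijOn θ (Ioi 0) (Ioi 0)) (hinv : InvOn θ' θ (Ioi 0) (Ioi 0))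
    (hθ : ContinuousOn θ (Ioi 0)) (hθ' : ContinuousOn θ' (Ioi 0))
    {α α' β β' : ℝ} (hα : α ≠ 0) (hα' : α' ≠ 0) (hβ : 0 < β) (hβ' : 0 < β')
    (hjensen : ∀ P ∈ Ioi (0 : ℝ) ×ˢ Ioi (0 : ℝ), ∀ Q ∈ Ioi (0 : ℝ) ×ˢ Ioi (0 : ℝ),
      quasiArithMean θ θ' β β' (α • P + α' • Q) =
        α * quasiArithMean θ θ' β β' P + α' * quasiArithMean θ θ' β β' Q) :
    ∃ c > 0, ∀ p > 0, θ p = c * p := by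
  have hθ'maps : MapsTo θ' (Ioi 0) (Ioi 0) := (hbij.symm hinv.symm).mapsTo
  have hcont : ContinuousOn (quasiArithMean θ θ' β β') (Ioi 0 ×ˢ Ioi 0) := by
    have h₁ : ContinuousOn (fun P : ℝ × ℝ => θ' P.1) (Ioi 0 ×ˢ Ioi 0) :=
      hθ'.comp continuousOn_fst fun P hP => hP.1
    have h₂ : ContinuousOn (fun P : ℝ × ℝ => θ' P.2) (Ioi 0 ×ˢ Ioi 0) :=
      hθ'.comp continuousOn_snd fun P hP => hP.2
    refine hθ.comp ((continuousOn_const.mul h₁).add (continuousOn_const.mul h₂)) fun P hP => ?_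
    have h₁ : 0 < θ' P.1 := hθ'maps hP.1
    have h₂ : 0 < θ' P.2 := hθ'maps hP.2
    exact show (0 : ℝ) < _ by positivity
  obtain ⟨a, b, e, hN⟩ := exists_affine_of_jensen_quadrant hα hα' hcont hjensen
  refine exists_pos_eq_mul_of_map_add hbij hθ hβ hβ' (a := a) (b := b) (e := e) fun p hp q hq => ?_
  have := hN _ (hbij.mapsTo hp) _ (hbij.mapsTo hq)
  rwa [quasiArithMean, hinv.1 hp, hinv.1 hq] at this

section Cells

variable {X Y Z : Type*}

open Classical in
noncomputable def cell (A : Set X) (B : Set Y) (a b c d : ℝ) (x : X) (y : Y) : ℝ :=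
  if x ∈ A then if y ∈ B then a else b else if y ∈ B then c else d

theorem cell_comm (A : Set X) (B : Set Y) (a b c d : ℝ) (x : X) (y : Y) :
    cell A B a b c d x y = cell B A a c b d y x := by
  unfold cell; split_ifs <;> rfl

variable [MeasurableSpace X] [MeasurableSpace Y] [MeasurableSpace Z]

theorem integral_ite_mem (ν : Measure Z) [IsFiniteMeasure ν] {B : Set Z} [DecidablePred (· ∈ B)]
    (hB : MeasurableSet B) (c₁ c₂ : ℝ) :
    ∫ z, (if z ∈ B then c₁ else c₂) ∂ν = ν.real B * c₁ + ν.real Bᶜ * c₂ := by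
  change ∫ z, B.piecewise (fun _ => c₁) (fun _ => c₂) z ∂ν = _
  rw [integral_piecewise hB integrableOn_const integrableOn_const, setIntegral_const,
    setIntegral_const, smul_eq_mul, smul_eq_mul]

theorem measureReal_pos_and_compl_pos {ν : Measure Z}
    [IsFiniteMeasure ν] {A : Set Z} (hA : MeasurableSet A) (h₀ : 0 < ν A) (h₁ : ν A < ν univ) :
    0 < ν.real A ∧ 0 < ν.real Aᶜ := by
  refine ⟨ENNReal.toReal_pos h₀.ne' (measure_ne_top ν A),
    ENNReal.toReal_pos ?_ (measure_ne_top ν _)⟩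
  rw [measure_compl hA (measure_ne_top ν A)]
  exact (tsub_pos_of_lt h₁).ne'

theorem integral_pos_of_forall_pos {ν : Measure Z} [NeZero ν] {φ : Z → ℝ}
    (hφ : Integrable φ ν) (hpos : ∀ z, 0 < φ z) : 0 < ∫ z, φ z ∂ν := by
  rw [integral_pos_iff_support_of_nonneg (fun z => (hpos z).le) hφ,
    Function.support_eq_univ fun z => (hpos z).ne', Measure.measure_univ_pos]
  exact NeZero.ne ν

theorem integral_integral_cell (lam : Measure X) (mu : Measure Y) [IsFiniteMeasure lam]
    [IsFiniteMeasure mu] {A : Set X} {B : Set Y} (hA : MeasurableSet A) (hB : MeasurableSet B)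
    (Φ ψ : ℝ → ℝ) (a b c d : ℝ) :
    ∫ x, Φ (∫ y, ψ (cell A B a b c d x y) ∂mu) ∂lam =
      lam.real A * Φ (mu.real B * ψ a + mu.real Bᶜ * ψ b) +
        lam.real Aᶜ * Φ (mu.real B * ψ c + mu.real Bᶜ * ψ d) := by
  classical
  have inner : ∀ x, ∫ y, ψ (cell A B a b c d x y) ∂mu = if x ∈ A
      then mu.real B * ψ a + mu.real Bᶜ * ψ b else mu.real B * ψ c + mu.real Bᶜ * ψ d := by
    intro x
    unfold cell
    split_ifs <;> simp only [apply_ite ψ] <;> exact integral_ite_mem mu hB _ _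
  simp_rw [inner, apply_ite Φ]
  exact integral_ite_mem lam hA _ _

noncomputable def cellFunc {A : Set X} {B : Set Y} (hA : MeasurableSet A) (hB : MeasurableSet B)
    (a b c d : ℝ) : SimpleFunc (X × Y) ℝ :=
  .piecewise (Prod.fst ⁻¹' A) (measurable_fst hA)
    (.piecewise (Prod.snd ⁻¹' B) (measurable_snd hB) (.const _ a) (.const _ b))
    (.piecewise (Prod.snd ⁻¹' B) (measurable_snd hB) (.const _ c) (.const _ d))

theorem cellFunc_apply {A : Set X} {B : Set Y} (hA : MeasurableSet A) (hB : MeasurableSet B)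
    (a b c d : ℝ) (x : X) (y : Y) : cellFunc hA hB a b c d (x, y) = cell A B a b c d x y := by
  by_cases hx : x ∈ A <;> by_cases hy : y ∈ B <;>
    simp [cellFunc, cell, SimpleFunc.piecewise_apply, hx, hy]

end Cells

section IteratedIntegrals

variable {X Y : Type*} [MeasurableSpace X] [MeasurableSpace Y] {lam : Measure X} {mu : Measure Y}
  [IsFiniteMeasure lam] [IsFiniteMeasure mu] {I : Set ℝ} {f g F G : ℝ → ℝ}

theorem quasiArithMean_jensen_of_iterated_integral_eq {A : Set X} {B : Set Y}
    (hA : MeasurableSet A) (hB : MeasurableSet B) (hα : 0 < lam.real A) (hα' : 0 < lam.real Aᶜ)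
    (hβ : 0 < mu.real B) (hβ' : 0 < mu.real Bᶜ)
    (hθ : MapsTo (f ∘ G) (Ioi 0) (Ioi 0)) (hθ' : MapsTo (g ∘ F) (Ioi 0) (Ioi 0))
    (hF : MapsTo F (Ioi 0) I) (hfF : RightInvOn F f (Ioi 0))
    (hEq : ∀ h : SimpleFunc (X × Y) ℝ, (∀ p : X × Y, h p ∈ I) →
      F (∫ x, f (G (∫ y, g (h (x, y)) ∂mu)) ∂lam) =
        G (∫ y, g (F (∫ x, f (h (x, y)) ∂lam)) ∂mu)) :
    ∀ P ∈ Ioi (0 : ℝ) ×ˢ Ioi (0 : ℝ), ∀ Q ∈ Ioi (0 : ℝ) ×ˢ Ioi (0 : ℝ),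
    quasiArithMean (f ∘ G) (g ∘ F) (mu.real B) (mu.real Bᶜ) (lam.real A • P + lam.real Aᶜ • Q) =
      lam.real A * quasiArithMean (f ∘ G) (g ∘ F) (mu.real B) (mu.real Bᶜ) P +
        lam.real Aᶜ * quasiArithMean (f ∘ G) (g ∘ F) (mu.real B) (mu.real Bᶜ) Q := by
  rintro ⟨s₁, t₁⟩ hP ⟨s₂, t₂⟩ hQ
  obtain ⟨hs₁, ht₁⟩ := hP
  obtain ⟨hs₂, ht₂⟩ := hQ
  have hcell : ∀ p, cellFunc hA hB (F s₁) (F t₁) (F s₂) (F t₂) p ∈ I := by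
    rintro ⟨x, y⟩
    rw [cellFunc_apply]
    unfold cell
    split_ifs <;> apply hF <;> assumption
  have key := congrArg f (hEq _ hcell)
  simp only [cellFunc_apply] at key
  rw [integral_integral_cell lam mu hA hB (fun v => f (G v)) g] at key
  -- the right-hand side integrates over `x` first: swap the roles of the two factors
  simp only [cell_comm A B] at key
  rw [integral_integral_cell mu lam hB hA (fun v => g (F v)) f, hfF hs₁, hfF ht₁, hfF hs₂,
    hfF ht₂, hfF] at key
  · exact key.symm
  exact add_pos (mul_pos hα (quasiArithMean_pos hθ hθ' hβ hβ' (P := (s₁, t₁)) ⟨hs₁, ht₁⟩))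
    (mul_pos hα' (quasiArithMean_pos hθ hθ' hβ hβ' (P := (s₂, t₂)) ⟨hs₂, ht₂⟩))

theorem iterated_integral_eq_of_eq_mul [NeZero lam] [NeZero mu] {c : ℝ}
    (hfg : ∀ t ∈ I, f t = c * g t) (hg : MapsTo g I (Ioi 0)) (hG : MapsTo G (Ioi 0) I)
    (hgG : RightInvOn G g (Ioi 0)) (hFf : LeftInvOn F f I)
    (h : SimpleFunc (X × Y) ℝ) (hh : ∀ p : X × Y, h p ∈ I) :
    F (∫ x, f (G (∫ y, g (h (x, y)) ∂mu)) ∂lam) = G (∫ y, g (F (∫ x, f (h (x, y)) ∂lam)) ∂mu) := by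
  have hfG : ∀ w > 0, f (G w) = c * w := fun w hw => by rw [hfg _ (hG hw), hgG hw]
  have hFG : ∀ w > 0, F (c * w) = G w := fun w hw => by rw [← hfG w hw, hFf (hG hw)]
  have hint : Integrable (fun p => g (h p)) (lam.prod mu) :=
    (h.map g).integrable_of_isFiniteMeasure
  have hw : ∀ x, 0 < ∫ y, g (h (x, y)) ∂mu := fun x => integral_pos_of_forall_pos
    ((h.map g).comp _ measurable_prodMk_left).integrable_of_isFiniteMeasure fun y => hg (hh _)
  have hv : ∀ y, 0 < ∫ x, g (h (x, y)) ∂lam := fun y => integral_pos_of_forall_pos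
    ((h.map g).comp _ measurable_prodMk_right).integrable_of_isFiniteMeasure fun x => hg (hh _)
  have inner : ∀ y, g (F (∫ x, f (h (x, y)) ∂lam)) = ∫ x, g (h (x, y)) ∂lam := fun y => by
    simp_rw [fun x => hfg _ (hh (x, y))]
    rw [integral_const_mul, hFG _ (hv y), hgG (hv y)]
  simp_rw [inner, fun x => hfG _ (hw x)]
  rw [integral_const_mul, hFG _ (integral_pos_of_forall_pos hint.integral_prod_left hw),
    integral_integral_swap hint]

end IteratedIntegrals

theorem stmt_14_general {X Y : Type*} [MeasurableSpace X] [MeasurableSpace Y]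
    (lam : Measure X) (mu : Measure Y)
    [IsFiniteMeasure lam] [IsFiniteMeasure mu]
    (hX : ∃ A : Set X, MeasurableSet A ∧ 0 < lam A ∧ lam A < lam Set.univ)
    (hY : ∃ B : Set Y, MeasurableSet B ∧ 0 < mu B ∧ mu B < mu Set.univ)
    (I : Set ℝ) (hIordconn : I.OrdConnected)
    (f g F G : ℝ → ℝ)
    (hfbij : Set.BijOn f I (Set.Ioi (0:ℝ))) (hfcont : ContinuousOn f I)
    (hgbij : Set.BijOn g I (Set.Ioi (0:ℝ))) (hgcont : ContinuousOn g I)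
    (hFf : ∀ x ∈ I, F (f x) = x) (hfF : ∀ t : ℝ, 0 < t → f (F t) = t)
    (hGg : ∀ x ∈ I, G (g x) = x) (hgG : ∀ t : ℝ, 0 < t → g (G t) = t) :
    (∀ h : SimpleFunc (X × Y) ℝ, (∀ p : X × Y, h p ∈ I) →
      F (∫ x, f (G (∫ y, g (h (x, y)) ∂mu)) ∂lam) =
        G (∫ y, g (F (∫ x, f (h (x, y)) ∂lam)) ∂mu)) ↔
    ∃ c : ℝ, 0 < c ∧ ∀ t ∈ I, f t = c * g t := by
  obtain ⟨A, hA, hA₀, hA₁⟩ := hX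
  obtain ⟨B, hB, hB₀, hB₁⟩ := hY
  have hGbij : BijOn G (Ioi 0) I := hgbij.symm ⟨hgG, hGg⟩
  have hFbij : BijOn F (Ioi 0) I := hfbij.symm ⟨hfF, hFf⟩
  constructor
  · intro hEq
    obtain ⟨hα, hα'⟩ := measureReal_pos_and_compl_pos hA hA₀ hA₁
    obtain ⟨hβ, hβ'⟩ := measureReal_pos_and_compl_pos hB hB₀ hB₁
    have hθ : BijOn (f ∘ G) (Ioi 0) (Ioi 0) := hfbij.comp hGbij
    have hθ' : BijOn (g ∘ F) (Ioi 0) (Ioi 0) := hgbij.comp hFbij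
    have hinv : InvOn (g ∘ F) (f ∘ G) (Ioi 0) (Ioi 0) :=
      InvOn.comp ⟨hgG, hGg⟩ ⟨hFf, hfF⟩ hGbij.mapsTo hFbij.mapsTo
    obtain ⟨c, hc, hfG⟩ := exists_pos_eq_mul_of_quasiArithMean_jensen hθ hinv
      (.comp_rightInvOn hfcont hfbij.injOn hgcont hgbij.injOn hGbij.mapsTo hgG isOpen_Ioi
        (by rw [hθ.image_eq]; exact isOpen_Ioi))
      (.comp_rightInvOn hgcont hgbij.injOn hfcont hfbij.injOn hFbij.mapsTo hfF isOpen_Ioi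
        (by rw [hθ'.image_eq]; exact isOpen_Ioi))
      hα.ne' hα'.ne' hβ hβ' (quasiArithMean_jensen_of_iterated_integral_eq hA hB hα hα' hβ hβ'
        hθ.mapsTo hθ'.mapsTo hFbij.mapsTo hfF hEq)
    exact ⟨c, hc, fun t ht => by simpa [hGg t ht] using hfG _ (hgbij.mapsTo ht)⟩
  · rintro ⟨c, -, hfg⟩ h hh
    have : NeZero lam := ⟨fun h0 => by simp [h0] at hA₀⟩
    have : NeZero mu := ⟨fun h0 => by simp [h0] at hB₀⟩
    exact iterated_integral_eq_of_eq_mul hfg hgbij.mapsTo hGbij.mapsTo hgG hFf h hh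

theorem stmt_14 {X Y : Type*} [MeasurableSpace X] [MeasurableSpace Y]
    (lam : Measure X) (mu : Measure Y)
    [IsFiniteMeasure lam] [IsFiniteMeasure mu]
    (hX : ∃ A : Set X, MeasurableSet A ∧ 0 < lam A ∧ lam A < lam Set.univ)
    (hY : ∃ B : Set Y, MeasurableSet B ∧ 0 < mu B ∧ mu B < mu Set.univ)
    (I : Set ℝ) (hI : I.Nonempty) (hIordconn : I.OrdConnected)
    (f g F G : ℝ → ℝ)
    (hfbij : Set.BijOn f I (Set.Ioi (0:ℝ))) (hfcont : ContinuousOn f I)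
    (hgbij : Set.BijOn g I (Set.Ioi (0:ℝ))) (hgcont : ContinuousOn g I)
    (hFf : ∀ x ∈ I, F (f x) = x) (hfF : ∀ t : ℝ, 0 < t → f (F t) = t)
    (hGg : ∀ x ∈ I, G (g x) = x) (hgG : ∀ t : ℝ, 0 < t → g (G t) = t) :
    (∀ h : SimpleFunc (X × Y) ℝ, (∀ p : X × Y, h p ∈ I) →
      F (∫ x, f (G (∫ y, g (h (x, y)) ∂mu)) ∂lam) =
        G (∫ y, g (F (∫ x, f (h (x, y)) ∂lam)) ∂mu)) ↔
    ∃ c : ℝ, 0 < c ∧ ∀ t ∈ I, f t = c * g t :=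
  stmt_14_general lam mu hX hY I hIordconn f g F G hfbij hfcont hgbij hgcont hFf hfF hGg hgG
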